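/- arXiv:1108.3444 — 2 statements merged into one kernel-verified Lean document; each statement's English description precedes it below -/
import Mathlib

section
/- Let G be a graph with α(G) ≤ 2 such that there exists a vertex v for which the subgraph induced on the neighborhood N(v) is perfect. Then gap(G) ≤ 1. -/
open SimpleGraph

/-- Independence number: maximum size of an independent (stable) set. -/
noncomputable def indepNum {V : Type*} [Fintype V] (G : SimpleGraph V) : ℕ :=
  sSup {n | ∃ s : Finset V, (s : Set V).Pairwise (fun a b => ¬ G.Adj a b) ∧ s.card = n}

/-- Clique cover number: minimum number of cliques covering all vertices. -/
noncomputable def cliqueCoverNum {V : Type*} [Fintype V] (G : SimpleGraph V) : ℕ :=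
  sInf {n | ∃ P : Finset (Finset V),
    (∀ c ∈ P, G.IsClique (c : Set V)) ∧ (∀ v : V, ∃ c ∈ P, v ∈ c) ∧ P.card = n}

/-- The (covering) gap of a graph: θ(G) - α(G). -/
noncomputable def gap {V : Type*} [Fintype V] (G : SimpleGraph V) : ℕ :=
  cliqueCoverNum G - _root_.indepNum G

/-- A graph is perfect when every induced subgraph satisfies θ = α. -/
def IsPerfect {W : Type*} [Fintype W] (H : SimpleGraph W) : Prop :=
  ∀ s : Finset W, cliqueCoverNum (H.induce (s : Set W)) = _root_.indepNum (H.induce (s : Set W))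

/-!
The non-neighbours of `v` form a clique, since two non-adjacent ones would give, together with
`v`, an independent set of size 3. Putting `v` into every clique of an optimal cover of `N(v)` and
adding this clique yields `θ(G) ≤ max(1, θ(G[N(v)])) + 1`. Perfection of `G[N(v)]` gives
`θ(G[N(v)]) = α(G[N(v)]) ≤ α(G)`, and `α(G) ≥ 1`, so `θ(G) ≤ α(G) + 1`.
-/

open SimpleGraph Finset

section

variable {V W : Type*} [Fintype V] [Fintype W] {G : SimpleGraph V} {H : SimpleGraph W}

lemma card_le_indepNum {s : Finset V} (hs : G.IsIndepSet (s : Set V)) :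
    #s ≤ _root_.indepNum G :=
  le_csSup ⟨Fintype.card V, by rintro n ⟨t, -, rfl⟩; exact card_le_univ t⟩ ⟨s, hs, rfl⟩

lemma one_le_indepNum (v : V) : 1 ≤ _root_.indepNum G := by
  simpa using card_le_indepNum (G := G) (s := {v}) (by simp)

lemma indepNum_le_of_embedding (f : H ↪g G) : _root_.indepNum H ≤ _root_.indepNum G := by
  classical
  refine csSup_le ?_ ?_
  · exact ⟨0, ∅, by simp⟩
  rintro n ⟨s, hs, rfl⟩
  rw [← card_map f.toEmbedding]
  refine card_le_indepNum ?_
  rintro _ ha _ hb hab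
  simp only [coe_map, Set.mem_image, mem_coe] at ha hb
  obtain ⟨a, ha, rfl⟩ := ha
  obtain ⟨b, hb, rfl⟩ := hb
  rw [RelEmbedding.coe_toEmbedding, f.map_adj_iff]
  exact hs ha hb (ne_of_apply_ne _ hab)

lemma cliqueCoverNum_le_card {P : Finset (Finset V)} (hclique : ∀ c ∈ P, G.IsClique (c : Set V))
    (hcover : ∀ v, ∃ c ∈ P, v ∈ c) : cliqueCoverNum G ≤ #P :=
  Nat.sInf_le ⟨P, hclique, hcover, rfl⟩

lemma exists_cliqueCover_card_eq (G : SimpleGraph V) :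
    ∃ P : Finset (Finset V), (∀ c ∈ P, G.IsClique (c : Set V)) ∧ (∀ v, ∃ c ∈ P, v ∈ c) ∧
      #P = cliqueCoverNum G := by
  classical
  refine Nat.sInf_mem (s := {n | ∃ P : Finset (Finset V), (∀ c ∈ P, G.IsClique (c : Set V)) ∧
    (∀ v, ∃ c ∈ P, v ∈ c) ∧ #P = n}) ⟨_, univ.image ({·}), ?_, fun v => ⟨{v}, by simp⟩, rfl⟩
  simp

lemma exists_nonempty_cliqueCover_card_eq (G : SimpleGraph V) :
    ∃ P : Finset (Finset V), P.Nonempty ∧ (∀ c ∈ P, G.IsClique (c : Set V)) ∧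
      (∀ v, ∃ c ∈ P, v ∈ c) ∧ #P = max 1 (cliqueCoverNum G) := by
  obtain ⟨P, hclique, hcover, hcard⟩ := exists_cliqueCover_card_eq G
  rcases P.eq_empty_or_nonempty with rfl | hP
  · refine ⟨{∅}, by simp, by simp, fun v => by simpa using hcover v, ?_⟩
    simp [← hcard]
  · exact ⟨P, hP, hclique, hcover, by rw [hcard, max_eq_right (hcard ▸ hP.card_pos)]⟩

omit [Fintype V] [Fintype W] in
lemma isClique_image_of_hom {s : Set W} (hs : H.IsClique s) (f : H →g G) :
    G.IsClique (f '' s) := by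
  rintro _ ⟨a, ha, rfl⟩ _ ⟨b, hb, rfl⟩ hab
  exact f.map_adj (hs ha hb (ne_of_apply_ne _ hab))

lemma cliqueCoverNum_le_of_surjective (f : H →g G) (hf : Function.Surjective f) :
    cliqueCoverNum G ≤ cliqueCoverNum H := by
  classical
  obtain ⟨P, hclique, hcover, hcard⟩ := exists_cliqueCover_card_eq H
  calc cliqueCoverNum G ≤ #(P.image (·.image f)) := by
        refine cliqueCoverNum_le_card ?_ fun v => ?_
        · simp only [mem_image, forall_exists_index, and_imp]
          rintro _ c hc rfl
          simpa using isClique_image_of_hom (hclique c hc) f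
        · obtain ⟨w, rfl⟩ := hf v
          obtain ⟨c, hc, hwc⟩ := hcover w
          exact ⟨c.image f, mem_image_of_mem _ hc, mem_image_of_mem _ hwc⟩
    _ ≤ #P := card_image_le
    _ = cliqueCoverNum H := hcard

lemma IsPerfect.cliqueCoverNum_le_indepNum (hH : IsPerfect H) :
    cliqueCoverNum H ≤ _root_.indepNum H := by
  classical
  let ι : H.induce (univ : Finset W) ↪g H := Embedding.induce _
  calc cliqueCoverNum H
      ≤ cliqueCoverNum (H.induce (univ : Finset W)) :=
        cliqueCoverNum_le_of_surjective ι.toHom fun w => ⟨⟨w, mem_univ w⟩, rfl⟩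
    _ = _root_.indepNum (H.induce (univ : Finset W)) := hH univ
    _ ≤ _root_.indepNum H := indepNum_le_of_embedding ι

lemma isClique_nonNeighbors_of_indepNum_le_two (hα : _root_.indepNum G ≤ 2) (v : V) :
    G.IsClique {w | w ≠ v ∧ ¬ G.Adj v w} := by
  classical
  rintro a ⟨hav, hva⟩ b ⟨hbv, hvb⟩ hab
  by_contra hnab
  have hindep : G.IsIndepSet (({v, a, b} : Finset V) : Set V) := by
    intro x hx y hy hxy
    simp only [coe_insert, coe_singleton, Set.mem_insert_iff, Set.mem_singleton_iff] at hx hy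
    rcases hx with rfl | rfl | rfl <;> rcases hy with rfl | rfl | rfl <;> simp_all [adj_comm]
  have := card_le_indepNum hindep
  rw [card_eq_three.mpr ⟨v, a, b, Ne.symm hav, Ne.symm hbv, hab, rfl⟩] at this
  omega

/-- `v` extends every clique of a cover of `N(v)`, and the non-neighbours form one more clique. -/
lemma cliqueCoverNum_le_of_isClique_nonNeighbors (v : V) [Fintype (G.neighborSet v)]
    (hK : G.IsClique {w | w ≠ v ∧ ¬ G.Adj v w}) :
    cliqueCoverNum G ≤ max 1 (cliqueCoverNum (G.induce (G.neighborSet v))) + 1 := by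
  classical
  obtain ⟨P, ⟨c₀, hc₀⟩, hclique, hcover, hcard⟩ :=
    exists_nonempty_cliqueCover_card_eq (G.induce (G.neighborSet v))
  let cone : Finset (G.neighborSet v) → Finset V :=
    fun c => insert v (c.map (Function.Embedding.subtype _))
  let K : Finset V := univ.filter fun w => w ≠ v ∧ ¬ G.Adj v w
  calc cliqueCoverNum G ≤ #(P.image cone ∪ {K}) := by
        refine cliqueCoverNum_le_card ?_ fun w => ?_
        · simp only [mem_union, mem_image, mem_singleton]
          rintro _ (⟨c, hc, rfl⟩ | rfl)
          · simp only [cone, coe_insert, coe_map, Function.Embedding.coe_subtype]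
            refine (isClique_image_of_hom (hclique c hc) (Embedding.induce _).toHom).insert ?_
            rintro _ ⟨u, -, rfl⟩ -
            exact u.2
          · simpa [K] using hK
        · by_cases hw : G.Adj v w
          · obtain ⟨c, hc, hwc⟩ := hcover ⟨w, hw⟩
            exact ⟨cone c, mem_union_left _ (mem_image_of_mem _ hc),
              mem_insert_of_mem (mem_map_of_mem _ hwc)⟩
          by_cases hwv : w = v
          · exact ⟨cone c₀, mem_union_left _ (mem_image_of_mem _ hc₀), hwv ▸ mem_insert_self _ _⟩
          · exact ⟨K, mem_union_right _ (mem_singleton_self K), by simp [K, hw, hwv]⟩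
    _ ≤ #P + 1 := (card_union_le _ _).trans (by rw [card_singleton]; gcongr; exact card_image_le)
    _ = _ := by rw [hcard]

end

theorem gap_le_one_of_perfect_neighborhood {V : Type*} [Fintype V] (G : SimpleGraph V)
    [DecidableRel G.Adj] (hα : _root_.indepNum G ≤ 2) (v : V)
    (hperf : IsPerfect (G.induce (G.neighborSet v))) :
    gap G ≤ 1 := by
  have hθ := cliqueCoverNum_le_of_isClique_nonNeighbors v (isClique_nonNeighbors_of_indepNum_le_two hα v)
  have hN : cliqueCoverNum (G.induce (G.neighborSet v)) ≤ _root_.indepNum G :=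
    hperf.cliqueCoverNum_le_indepNum.trans (indepNum_le_of_embedding (Embedding.induce _))
  have h1 : 1 ≤ _root_.indepNum G := one_le_indepNum v
  rw [gap]
  omega
end

section
/- If s(t+1) = s(t) + 2, then every (t+1)-extremal graph is triangle-free, and s(t) = s₂(t) and s(t+1) = s₂(t+1). -/
/-!
Deleting a clique cannot raise the independence number and lowers the clique cover number by at
most one, so it lowers the gap by at most one. Deleting vertices one at a time therefore realises
every value below `gap G` on an induced subgraph, whence `s(m) ≤ |V|` as soon as `m ≤ gap G`.
A triangle in a graph of order `s(t+1)` and gap `t+1` would thus give `s(t) + 3 ≤ s(t+1)`, so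
extremal graphs are triangle-free; deleting an edge of one leaves a triangle-free graph of order
`s(t)` and gap at least `t`.
-/

open SimpleGraph

/-- s(t): smallest number of vertices of a graph with gap t. -/
noncomputable def sFun (t : ℕ) : ℕ :=
  sInf {n | ∃ G : SimpleGraph (Fin n), gap G = t}

/-- s₂(t): smallest number of vertices of a triangle-free graph with gap t. -/
noncomputable def s2Fun (t : ℕ) : ℕ :=
  sInf {n | ∃ G : SimpleGraph (Fin n), G.CliqueFree 3 ∧ gap G = t}

open Finset

universe u

variable {V W : Type*} {G : SimpleGraph V} {H : SimpleGraph W}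

theorem indepNum_eq_simpleGraph_indepNum [Fintype V] (G : SimpleGraph V) :
    _root_.indepNum G = G.indepNum := by
  simp only [_root_.indepNum, SimpleGraph.indepNum, isNIndepSet_iff]

theorem SimpleGraph.Embedding.indepNum_le [Finite V] (f : H ↪g G) :
    H.indepNum ≤ G.indepNum := by
  obtain ⟨s, hs⟩ := H.exists_isNIndepSet_indepNum
  rw [← hs.card_eq, ← card_map f.toEmbedding]
  refine IsIndepSet.card_le_indepNum ?_
  rintro _ ha _ hb hab
  simp only [coe_map, Set.mem_image, mem_coe] at ha hb
  obtain ⟨x, hx, rfl⟩ := ha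
  obtain ⟨y, hy, rfl⟩ := hb
  exact fun hadj => hs.isIndepSet hx hy (ne_of_apply_ne _ hab) (f.map_adj_iff.1 hadj)

def IsCliqueCover (G : SimpleGraph V) (P : Finset (Finset V)) : Prop :=
  (∀ c ∈ P, G.IsClique (c : Set V)) ∧ ∀ v, ∃ c ∈ P, v ∈ c

theorem IsCliqueCover.cliqueCoverNum_le [Fintype V] {P : Finset (Finset V)}
    (hP : IsCliqueCover G P) : cliqueCoverNum G ≤ #P :=
  Nat.sInf_le ⟨P, hP.1, hP.2, rfl⟩

theorem isCliqueCover_singletons [Fintype V] (G : SimpleGraph V) :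
    IsCliqueCover G (univ.map ⟨singleton, singleton_injective⟩) := by
  refine ⟨fun c hc => ?_,
    fun v => ⟨{v}, mem_map_of_mem _ (mem_univ v), mem_singleton_self v⟩⟩
  obtain ⟨v, -, rfl⟩ := mem_map.1 hc
  simp

theorem cliqueCoverNum_le_card_s13 [Fintype V] (G : SimpleGraph V) :
    cliqueCoverNum G ≤ Fintype.card V := by
  simpa using (isCliqueCover_singletons G).cliqueCoverNum_le

theorem exists_isCliqueCover_card_eq [Fintype V] (G : SimpleGraph V) :
    ∃ P, IsCliqueCover G P ∧ #P = cliqueCoverNum G := by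
  have hne : {n | ∃ P : Finset (Finset V), (∀ c ∈ P, G.IsClique (c : Set V)) ∧
      (∀ v, ∃ c ∈ P, v ∈ c) ∧ #P = n}.Nonempty :=
    ⟨_, _, (isCliqueCover_singletons G).1, (isCliqueCover_singletons G).2, rfl⟩
  obtain ⟨P, h₁, h₂, h₃⟩ := Nat.sInf_mem hne
  exact ⟨P, ⟨h₁, h₂⟩, h₃⟩

theorem IsCliqueCover.exists_preimage {P : Finset (Finset V)} (hP : IsCliqueCover G P)
    (f : H ↪g G) : ∃ Q, IsCliqueCover H Q ∧ #Q ≤ #P := by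
  classical
  refine ⟨P.image fun c => c.preimage f f.injective.injOn, ⟨fun c hc => ?_, fun w => ?_⟩,
    card_image_le⟩
  · obtain ⟨c, hcP, rfl⟩ := mem_image.1 hc
    intro x hx y hy hxy
    simp only [coe_preimage, Set.mem_preimage, mem_coe] at hx hy
    exact f.map_adj_iff.1 (hP.1 c hcP hx hy (f.injective.ne hxy))
  · obtain ⟨c, hcP, hc⟩ := hP.2 (f w)
    exact ⟨_, mem_image_of_mem _ hcP, mem_preimage.2 hc⟩

theorem SimpleGraph.Embedding.cliqueCoverNum_le [Fintype V] [Fintype W] (f : H ↪g G) :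
    cliqueCoverNum H ≤ cliqueCoverNum G := by
  obtain ⟨P, hP, hcard⟩ := exists_isCliqueCover_card_eq G
  obtain ⟨Q, hQ, hQP⟩ := hP.exists_preimage f
  exact hQ.cliqueCoverNum_le.trans (hcard ▸ hQP)

theorem SimpleGraph.Iso.gap_eq [Fintype V] [Fintype W] (e : H ≃g G) : gap H = gap G := by
  have h₁ := e.toEmbedding.cliqueCoverNum_le
  have h₂ := e.symm.toEmbedding.cliqueCoverNum_le
  have h₃ := e.toEmbedding.indepNum_le
  have h₄ := e.symm.toEmbedding.indepNum_le
  simp only [gap, indepNum_eq_simpleGraph_indepNum]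
  omega

theorem gap_le_card [Fintype V] (G : SimpleGraph V) : gap G ≤ Fintype.card V :=
  (Nat.sub_le _ _).trans (cliqueCoverNum_le_card_s13 G)

theorem gap_bot [Fintype V] : gap (⊥ : SimpleGraph V) = 0 := by
  have h : Fintype.card V ≤ (⊥ : SimpleGraph V).indepNum := by
    simpa using IsIndepSet.card_le_indepNum (G := ⊥) (t := univ) fun _ _ _ _ _ h => h
  have := cliqueCoverNum_le_card_s13 (⊥ : SimpleGraph V)
  simp only [gap, indepNum_eq_simpleGraph_indepNum]
  omega

theorem cliqueCoverNum_le_cliqueCoverNum_induce_compl_add_one [Fintype V] [DecidableEq V]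
    {T : Finset V} (hT : G.IsClique (T : Set V)) :
    cliqueCoverNum G ≤ cliqueCoverNum (G.induce ↑Tᶜ) + 1 := by
  obtain ⟨P, hP, hcard⟩ := exists_isCliqueCover_card_eq (G.induce ↑Tᶜ)
  let ι : (G.induce ↑Tᶜ) ↪g G := Embedding.induce _
  have hcover : IsCliqueCover G (insert T (P.image (map ι.toEmbedding))) := by
    refine ⟨fun c hc => ?_, fun v => ?_⟩
    · obtain rfl | hc := mem_insert.1 hc
      · exact hT
      obtain ⟨c, hcP, rfl⟩ := mem_image.1 hc
      simpa only [coe_map] using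
        ((hP.1 c hcP).map (f := ι.toEmbedding)).mono (map_comap_le _ _)
    · by_cases hv : v ∈ T
      · exact ⟨T, mem_insert_self _ _, hv⟩
      obtain ⟨c, hcP, hc⟩ := hP.2 ⟨v, by simpa using hv⟩
      exact ⟨_, mem_insert_of_mem (mem_image_of_mem _ hcP), mem_map_of_mem _ hc⟩
  calc cliqueCoverNum G ≤ #(insert T (P.image (map ι.toEmbedding))) := hcover.cliqueCoverNum_le
    _ ≤ #P + 1 := (card_insert_le _ _).trans (by grw [card_image_le])
    _ = _ := by rw [hcard]

theorem gap_le_gap_induce_compl_add_one [Fintype V] [DecidableEq V] {T : Finset V}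
    (hT : G.IsClique (T : Set V)) : gap G ≤ gap (G.induce ↑Tᶜ) + 1 := by
  have h₁ := cliqueCoverNum_le_cliqueCoverNum_induce_compl_add_one hT
  have h₂ := (Embedding.induce (G := G) ↑Tᶜ).indepNum_le
  simp only [gap, indepNum_eq_simpleGraph_indepNum]
  omega

theorem card_coe_compl [Fintype V] [DecidableEq V] (T : Finset V) :
    Fintype.card (↑Tᶜ : Set V) = Fintype.card V - #T := by
  simp only [coe_sort_coe, Fintype.card_coe, card_compl]

theorem exists_embedding_gap_eq {V : Type u} [Fintype V] (G : SimpleGraph V) {m : ℕ}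
    (hm : m ≤ gap G) : ∃ (W : Type u) (_ : Fintype W) (H : SimpleGraph W),
      Nonempty (H ↪g G) ∧ gap H = m := by
  classical
  induction hn : Fintype.card V using Nat.strong_induction_on generalizing V with
  | _ n ih =>
  obtain rfl | hlt := hm.eq_or_lt
  · exact ⟨V, inferInstance, G, ⟨Embedding.refl⟩, rfl⟩
  have hpos : 0 < Fintype.card V := (Nat.zero_le m).trans_lt (hlt.trans_le (gap_le_card G))
  obtain ⟨v⟩ := Fintype.card_pos_iff.1 hpos
  have hv : G.IsClique (({v} : Finset V) : Set V) := by simp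
  have hgap := gap_le_gap_induce_compl_add_one hv
  have hcard := card_coe_compl ({v} : Finset V)
  rw [card_singleton] at hcard
  obtain ⟨W, _, H, ⟨f⟩, hH⟩ :=
    ih (n - 1) (by omega) (G.induce ↑({v} : Finset V)ᶜ) (by omega) (hn ▸ hcard)
  exact ⟨W, _, H, ⟨(Embedding.induce _).comp f⟩, hH⟩

theorem exists_fin_isContained_gap_eq [Fintype V] (G : SimpleGraph V) {m : ℕ}
    (hm : m ≤ gap G) :
    ∃ n ≤ Fintype.card V, ∃ H : SimpleGraph (Fin n), H ⊑ G ∧ gap H = m := by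
  obtain ⟨W, _, H, ⟨f⟩, hH⟩ := exists_embedding_gap_eq G hm
  let e := Iso.map (Fintype.equivFin W) H
  exact ⟨_, Fintype.card_le_of_embedding f.toEmbedding, _,
    e.symm.isContained.trans f.isContained, e.gap_eq.symm.trans hH⟩

theorem sFun_le_card [Fintype V] {m : ℕ} (hm : m ≤ gap G) : sFun m ≤ Fintype.card V := by
  obtain ⟨n, hn, H, -, hH⟩ := exists_fin_isContained_gap_eq G hm
  have hmem : n ∈ {n | ∃ G : SimpleGraph (Fin n), gap G = m} := ⟨H, hH⟩
  exact (Nat.sInf_le hmem).trans hn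

theorem s2Fun_le_card [Fintype V] {m : ℕ} (hG : G.CliqueFree 3) (hm : m ≤ gap G) :
    s2Fun m ≤ Fintype.card V := by
  obtain ⟨n, hn, H, hHG, hH⟩ := exists_fin_isContained_gap_eq G hm
  have hmem : n ∈ {n | ∃ G : SimpleGraph (Fin n), G.CliqueFree 3 ∧ gap G = m} :=
    ⟨H, hG.comap hHG, hH⟩
  exact (Nat.sInf_le hmem).trans hn

theorem sFun_le_s2Fun [Fintype V] {m : ℕ} (hG : G.CliqueFree 3) (hm : m ≤ gap G) :
    sFun m ≤ s2Fun m := by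
  obtain ⟨n, -, H, hHG, hH⟩ := exists_fin_isContained_gap_eq G hm
  have hne : {n | ∃ G : SimpleGraph (Fin n), G.CliqueFree 3 ∧ gap G = m}.Nonempty :=
    ⟨n, H, hG.comap hHG, hH⟩
  obtain ⟨H', -, hH'⟩ := Nat.sInf_mem hne
  exact (sFun_le_card hH'.ge).trans_eq (Fintype.card_fin _)

theorem sFun_eq_s2Fun [Fintype V] {m : ℕ} (hG : G.CliqueFree 3) (hm : m ≤ gap G)
    (hcard : Fintype.card V = sFun m) : sFun m = s2Fun m :=
  (sFun_le_s2Fun hG hm).antisymm (hcard ▸ s2Fun_le_card hG hm)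

theorem sFun_add_card_le [Fintype V] [DecidableEq V] {T : Finset V} {m : ℕ}
    (hT : G.IsClique (T : Set V)) (hm : m + 1 ≤ gap G) : sFun m + #T ≤ Fintype.card V := by
  have hgap := gap_le_gap_induce_compl_add_one hT
  have hle := sFun_le_card (m := m) (G := G.induce ↑Tᶜ) (by omega)
  rw [card_coe_compl] at hle
  have := card_le_univ T
  omega

theorem cliqueFree_of_card_lt_sFun_add [Fintype V] {m k : ℕ} (hm : m + 1 ≤ gap G)
    (hk : Fintype.card V < sFun m + k) : G.CliqueFree k := by
  classical
  intro T hT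
  have := sFun_add_card_le hT.isClique hm
  rw [hT.card_eq] at this
  omega

theorem exists_gap_eq_of_sFun_ne_zero {m : ℕ} (h : sFun m ≠ 0) :
    ∃ G : SimpleGraph (Fin (sFun m)), gap G = m :=
  Nat.sInf_mem (Nat.nonempty_of_pos_sInf (Nat.pos_of_ne_zero h))

theorem sFun_step_two (t : ℕ) (h : sFun (t + 1) = sFun t + 2) :
    (∀ (V : Type) [Fintype V] (G : SimpleGraph V),
      Fintype.card V = sFun (t + 1) → gap G = t + 1 → G.CliqueFree 3) ∧
    sFun t = s2Fun t ∧ sFun (t + 1) = s2Fun (t + 1) := by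
  have extremal_cliqueFree : ∀ (V : Type) [Fintype V] (G : SimpleGraph V),
      Fintype.card V = sFun (t + 1) → gap G = t + 1 → G.CliqueFree 3 :=
    fun V _ G hcard hgap => cliqueFree_of_card_lt_sFun_add hgap.ge (by omega)
  obtain ⟨G, hG⟩ := exists_gap_eq_of_sFun_ne_zero (m := t + 1) (by omega)
  have hGfree := extremal_cliqueFree _ G (Fintype.card_fin _) hG
  obtain ⟨a, b, hab⟩ :=
    ne_bot_iff_exists_adj.1 fun hbot : G = ⊥ => by simp [hbot, gap_bot] at hG
  let T : Finset (Fin (sFun (t + 1))) := {a, b}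
  have hT : G.IsClique (T : Set _) := by simpa [T] using isClique_pair.2 fun _ => hab
  have hgap := gap_le_gap_induce_compl_add_one hT
  have hcard := card_coe_compl T
  rw [card_pair hab.ne, Fintype.card_fin] at hcard
  exact ⟨extremal_cliqueFree,
    sFun_eq_s2Fun (hGfree.comap (Embedding.induce (G := G) ↑Tᶜ).isContained) (by omega)
      (by omega),
    sFun_eq_s2Fun hGfree hG.ge (Fintype.card_fin _)⟩
end
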